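/- arXiv:1505.01001 — 2 statements merged into one kernel-verified Lean document; each statement's English description precedes it below -/
import Mathlib

section
/- Let 𝔄 be a unital C*-algebra, ω : 𝔄 → ℂ a state, and U ∈ 𝔄 a unitary element. Then for any Y ∈ 𝔄, |ω(U)ω(Y) − ω(UY)| ≤ √(1 − |ω(U)|²) · √(ω(Y*Y)). -/
/-!
A positive functional gives the positive semidefinite sesquilinear form `⟪a, b⟫ = ω (a⋆ b)`.
With `d = (ω(U) - U)⋆` one has `ω(U)ω(Y) - ω(UY) = ⟪d, Y⟫` and
`⟪d, d⟫ = ω(UU⋆) - |ω(U)|² = 1 - |ω(U)|²`, so the bound is Cauchy–Schwarz for this form.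
-/

open scoped ComplexOrder
open ComplexConjugate

namespace LinearMap

variable {A : Type*} [Ring A] [StarRing A] [Algebra ℂ A] [StarModule ℂ A] (ω : A →ₗ[ℂ] ℂ)

theorem map_star_of_star_mul_self_nonneg (hω : ∀ a : A, 0 ≤ ω (star a * a)) (a : A) :
    ω (star a) = conj (ω a) := by
  -- the imaginary parts of `ω (star b * b)` vanish for `b = 1`, `a + 1` and `a + i`
  have him (b : A) : (ω (star b * b)).im = 0 := (Complex.nonneg_iff.1 (hω b)).2.symm
  have him_one := him 1
  have him_add_one := him (a + 1)
  have him_add_I := him (a + Complex.I • 1)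
  simp only [star_add, star_smul, star_one, add_mul, mul_add, smul_mul_assoc, mul_smul_comm,
    one_mul, mul_one, map_add, map_smul, smul_eq_mul, Complex.star_def, Complex.conj_I,
    Complex.add_im, Complex.mul_im, Complex.I_re, Complex.I_im, Complex.mul_re, Complex.neg_re,
    Complex.neg_im, him a] at him_one him_add_one him_add_I
  apply Complex.ext <;> simp only [Complex.conj_re, Complex.conj_im] <;> linarith

noncomputable abbrev gnsInnerCore (hω : ∀ a : A, 0 ≤ ω (star a * a)) :
    PreInnerProductSpace.Core ℂ A where
  inner a b := ω (star a * b)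
  conj_inner_symm a b := by
    simp only [← map_star_of_star_mul_self_nonneg ω hω, star_mul, star_star]
  re_inner_nonneg a := (Complex.nonneg_iff.1 (hω a)).1
  add_left a b c := by simp only [star_add, add_mul, map_add]
  smul_left a b c := by simp only [star_smul, smul_mul_assoc, map_smul, smul_eq_mul]; rfl

theorem norm_map_star_mul_sq_le (hω : ∀ a : A, 0 ≤ ω (star a * a)) (a b : A) :
    ‖ω (star a * b)‖ ^ 2 ≤ (ω (star a * a)).re * (ω (star b * b)).re := by
  let _ := gnsInnerCore ω hω
  have hcs : ‖ω (star a * b)‖ * ‖ω (star b * a)‖ ≤ (ω (star a * a)).re * (ω (star b * b)).re :=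
    InnerProductSpace.Core.inner_mul_inner_self_le (𝕜 := ℂ) a b
  have hsymm : ‖ω (star b * a)‖ = ‖ω (star a * b)‖ := by
    rw [← Complex.norm_conj, ← map_star_of_star_mul_self_nonneg ω hω, star_mul, star_star]
  rwa [hsymm, ← sq] at hcs

theorem map_smul_one_sub_mul_star (hω : ∀ a : A, 0 ≤ ω (star a * a)) (hone : ω 1 = 1) (a : A) :
    ω ((ω a • 1 - a) * star (ω a • 1 - a)) = ω (a * star a) - (‖ω a‖ : ℂ) ^ 2 := by
  simp only [star_sub, star_smul, star_one, sub_mul, mul_sub, smul_mul_assoc, mul_smul_comm,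
    one_mul, mul_one, map_sub, map_smul, smul_eq_mul, hone, Complex.star_def,
    map_star_of_star_mul_self_nonneg ω hω a]
  rw [Complex.mul_conj, Complex.normSq_eq_norm_sq]
  push_cast
  ring

end LinearMap

theorem statement0_general {A : Type*} [NormedRing A] [StarRing A]
    [NormedAlgebra ℂ A] [StarModule ℂ A]
    (ω : A →ₗ[ℂ] ℂ)
    (hpos : ∀ a : A, ∃ r : ℝ, 0 ≤ r ∧ ω (star a * a) = (r : ℂ))
    (hone : ω 1 = 1)
    (U : A) (hU : U ∈ unitary A) (Y : A) :
    ‖ω U * ω Y - ω (U * Y)‖ ≤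
      Real.sqrt (1 - ‖ω U‖ ^ 2) * Real.sqrt ((ω (star Y * Y)).re) := by
  have hω (a : A) : 0 ≤ ω (star a * a) := by
    obtain ⟨r, hr, h⟩ := hpos a
    exact h ▸ Complex.zero_le_real.2 hr
  set d := star (ω U • (1 : A) - U)
  have hdiff : ω U * ω Y - ω (U * Y) = ω (star d * Y) := by
    simp only [d, star_star, sub_mul, smul_mul_assoc, one_mul, map_sub, map_smul, smul_eq_mul]
  have hvar : ω (star d * d) = 1 - (‖ω U‖ : ℂ) ^ 2 := by
    rw [star_star, ω.map_smul_one_sub_mul_star hω hone, Unitary.mul_star_self_of_mem hU, hone]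
  have hcs := ω.norm_map_star_mul_sq_le hω d Y
  rw [← hdiff, hvar] at hcs
  rw [← Real.sqrt_mul' _ (Complex.nonneg_iff.1 (hω Y)).1]
  exact Real.le_sqrt_of_sq_le (by simpa [← Complex.ofReal_pow] using hcs)

/-- Let 𝔄 be a unital C*-algebra, ω a state on 𝔄 and `U ∈ 𝔄` unitary.
Then for any `Y ∈ 𝔄`, `|ω(U)ω(Y) − ω(UY)| ≤ √(1 − |ω(U)|²) · √(ω(Y*Y))`. -/
theorem statement0 {A : Type*} [NormedRing A] [StarRing A] [CStarRing A]
    [NormedAlgebra ℂ A] [CompleteSpace A] [StarModule ℂ A]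
    (ω : A →ₗ[ℂ] ℂ)
    (hpos : ∀ a : A, ∃ r : ℝ, 0 ≤ r ∧ ω (star a * a) = (r : ℂ))
    (hone : ω 1 = 1)
    (U : A) (hU : U ∈ unitary A) (Y : A) :
    ‖ω U * ω Y - ω (U * Y)‖ ≤
      Real.sqrt (1 - ‖ω U‖ ^ 2) * Real.sqrt ((ω (star Y * Y)).re) :=
  statement0_general ω hpos hone U hU Y
end

section
/- With notation as in the previous item, suppose d ∈ C^{lf}_{n+1}(E; Ĝ) is a locally finite chain with |supp ∂d| < ∞ and a ∈ Cⁿ(E; G) is a cochain with |supp ∂ᵀa| < ∞. Then the quantity ⟨d, ∂ᵀa⟩ − ⟨∂d, a⟩ ∈ ℚ/ℤ is unchanged if d is replaced by d + ∂f + d' with f an arbitrary locally finite (n+2)-chain and d' a finitely supported (n+1)-chain, and similarly unchanged if a is replaced by a + ∂ᵀe + a' with e an arbitrary (n−1)-cochain and a' a finitely supported n-cochain. Hence the pairing ⟨[d]_∞, [a]_∞⟩ := ⟨d, ∂ᵀa⟩ − ⟨∂d, a⟩ descends to a well-defined bilinear map H^∞_n(E; Ĝ) × H_∞^n(E; G)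 → ℚ/ℤ between homology and cohomology at infinity. -/
/-- The group `ℚ/ℤ`. -/
abbrev QZ : Type := ℚ ⧸ AddSubgroup.zmultiples (1 : ℚ)

section

variable {G : Type*} [AddCommGroup G]

/-- Boundary of a locally finite chain: `(∂x)_b = Σ_a m_{ab} x_a`. -/
noncomputable def bnd {A B : Type*} (m : A → B → ℤ) (x : A → (G →+ QZ)) :
    B → (G →+ QZ) :=
  fun b => ∑ᶠ a : A, m a b • x a

/-- Coboundary of a cochain: `(∂ᵀy)_a = Σ_b m_{ab} y_b`. -/
noncomputable def cobnd {A B : Type*} (m : A → B → ℤ) (y : B → G) : A → G :=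
  fun a => ∑ᶠ b : B, m a b • y b

/-- Pairing of a chain with a cochain in the same degree: `⟨x, y⟩ = Σ_a x_a(y_a)`. -/
noncomputable def pairing {A : Type*} (x : A → (G →+ QZ)) (y : A → G) : QZ :=
  ∑ᶠ a : A, x a (y a)

end

section Helpers

variable {G : Type*} [AddCommGroup G]

open Function

lemma pairing_eq_sum {A : Type*} (x : A → (G →+ QZ)) (y : A → G) (s : Finset A)
    (h : ∀ a, x a (y a) ≠ 0 → a ∈ s) :
    pairing x y = ∑ a ∈ s, x a (y a) :=
  finsum_eq_finset_sum_of_support_subset _ (fun a ha => h a ha)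

lemma bnd_eq_sum {A B : Type*} (m : A → B → ℤ) (x : A → (G →+ QZ)) (b : B)
    (s : Finset A) (h : ∀ a, m a b • x a ≠ 0 → a ∈ s) :
    bnd m x b = ∑ a ∈ s, m a b • x a :=
  finsum_eq_finset_sum_of_support_subset _ (fun a ha => h a ha)

lemma cobnd_eq_sum {A B : Type*} (m : A → B → ℤ) (y : B → G) (a : A)
    (t : Finset B) (h : ∀ b, m a b • y b ≠ 0 → b ∈ t) :
    cobnd m y a = ∑ b ∈ t, m a b • y b :=
  finsum_eq_finset_sum_of_support_subset _ (fun b hb => h b hb)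

lemma pairing_add_left {A : Type*} (x x' : A → (G →+ QZ)) (y : A → G)
    (hy : {a | y a ≠ 0}.Finite) :
    pairing (fun a => x a + x' a) y = pairing x y + pairing x' y := by
  have h1 : (support fun a => x a (y a)).Finite :=
    hy.subset (fun a ha => by intro h; apply ha; simp [h])
  have h2 : (support fun a => x' a (y a)).Finite :=
    hy.subset (fun a ha => by intro h; apply ha; simp [h])
  simpa [pairing, AddMonoidHom.add_apply] using finsum_add_distrib h1 h2

lemma pairing_add_left' {A : Type*} (x x' : A → (G →+ QZ)) (y : A → G)
    (hx : {a | x a ≠ 0}.Finite) (hx' : {a | x' a ≠ 0}.Finite) :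
    pairing (fun a => x a + x' a) y = pairing x y + pairing x' y := by
  have h1 : (support fun a => x a (y a)).Finite :=
    hx.subset (fun a ha => by intro h; apply ha; simp [h])
  have h2 : (support fun a => x' a (y a)).Finite :=
    hx'.subset (fun a ha => by intro h; apply ha; simp [h])
  simpa [pairing, AddMonoidHom.add_apply] using finsum_add_distrib h1 h2

lemma pairing_add_right {A : Type*} (x : A → (G →+ QZ)) (y y' : A → G)
    (hx : {a | x a ≠ 0}.Finite) :
    pairing x (fun a => y a + y' a) = pairing x y + pairing x y' := by
  have h1 : (support fun a => x a (y a)).Finite :=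
    hx.subset (fun a ha => by intro h; apply ha; simp [h])
  have h2 : (support fun a => x a (y' a)).Finite :=
    hx.subset (fun a ha => by intro h; apply ha; simp [h])
  simpa [pairing, map_add] using finsum_add_distrib h1 h2

lemma pairing_add_right' {A : Type*} (x : A → (G →+ QZ)) (y y' : A → G)
    (hy : {a | y a ≠ 0}.Finite) (hy' : {a | y' a ≠ 0}.Finite) :
    pairing x (fun a => y a + y' a) = pairing x y + pairing x y' := by
  have h1 : (support fun a => x a (y a)).Finite :=
    hy.subset (fun a ha => by intro h; apply ha; simp [h])
  have h2 : (support fun a => x a (y' a)).Finite :=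
    hy'.subset (fun a ha => by intro h; apply ha; simp [h])
  simpa [pairing, map_add] using finsum_add_distrib h1 h2

lemma pairing_zero_right {A : Type*} (x : A → (G →+ QZ)) :
    pairing x (fun _ => 0) = 0 := by
  simp [pairing]

lemma pairing_zero_left {A : Type*} (y : A → G) :
    pairing (fun _ : A => (0 : G →+ QZ)) y = 0 := by
  simp [pairing]

lemma bnd_add {A B : Type*} (m : A → B → ℤ) (x x' : A → (G →+ QZ))
    (hcol : ∀ b, {a | m a b ≠ 0}.Finite) :
    bnd m (fun a => x a + x' a) = fun b => bnd m x b + bnd m x' b := by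
  funext b
  have h1 : (support fun a => m a b • x a).Finite :=
    (hcol b).subset (fun a ha => by intro h; apply ha; simp [h])
  have h2 : (support fun a => m a b • x' a).Finite :=
    (hcol b).subset (fun a ha => by intro h; apply ha; simp [h])
  simpa [bnd, smul_add] using finsum_add_distrib h1 h2

lemma cobnd_add {A B : Type*} (m : A → B → ℤ) (y y' : B → G)
    (hrow : ∀ a, {b | m a b ≠ 0}.Finite) :
    cobnd m (fun b => y b + y' b) = fun a => cobnd m y a + cobnd m y' a := by
  funext a
  have h1 : (support fun b => m a b • y b).Finite :=
    (hrow a).subset (fun b hb => by intro h; apply hb; simp [h])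
  have h2 : (support fun b => m a b • y' b).Finite :=
    (hrow a).subset (fun b hb => by intro h; apply hb; simp [h])
  simpa [cobnd, smul_add] using finsum_add_distrib h1 h2

/-- The common double-sum form of adjointness. -/
lemma pairing_adj_core {A B : Type*} (m : A → B → ℤ) (x : A → (G →+ QZ)) (y : B → G)
    (s : Finset A) (t : Finset B)
    (hL : pairing x (cobnd m y) = ∑ a ∈ s, x a (cobnd m y a))
    (hR : pairing (bnd m x) y = ∑ b ∈ t, bnd m x b (y b))
    (hco : ∀ a ∈ s, cobnd m y a = ∑ b ∈ t, m a b • y b)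
    (hbd : ∀ b ∈ t, bnd m x b = ∑ a ∈ s, m a b • x a) :
    pairing x (cobnd m y) = pairing (bnd m x) y := by
  rw [hL, hR]
  calc ∑ a ∈ s, x a (cobnd m y a)
      = ∑ a ∈ s, ∑ b ∈ t, m a b • x a (y b) := by
        refine Finset.sum_congr rfl fun a ha => ?_
        rw [hco a ha, map_sum]
        exact Finset.sum_congr rfl fun b _ => map_zsmul (x a) _ _
    _ = ∑ b ∈ t, ∑ a ∈ s, m a b • x a (y b) := Finset.sum_comm
    _ = ∑ b ∈ t, bnd m x b (y b) := by
        refine Finset.sum_congr rfl fun b hb => ?_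
        rw [hbd b hb, AddMonoidHom.finset_sum_apply]
        exact (Finset.sum_congr rfl fun a _ => (AddMonoidHom.smul_apply _ _ _)).symm

/-- Adjointness when the chain has finite support. -/
lemma pairing_adj_left {A B : Type*} (m : A → B → ℤ) (x : A → (G →+ QZ)) (y : B → G)
    (hx : {a | x a ≠ 0}.Finite) (hrow : ∀ a, {b | m a b ≠ 0}.Finite) :
    pairing x (cobnd m y) = pairing (bnd m x) y := by
  classical
  set s : Finset A := hx.toFinset with hs
  set t : Finset B := s.biUnion (fun a => (hrow a).toFinset) with ht
  have hxs : ∀ a, x a ≠ 0 → a ∈ s := fun a ha => hx.mem_toFinset.2 ha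
  have hmem : ∀ a ∈ s, ∀ b, m a b ≠ 0 → b ∈ t := fun a ha b hb =>
    Finset.mem_biUnion.2 ⟨a, ha, (hrow a).mem_toFinset.2 hb⟩
  have hbd : ∀ b, bnd m x b = ∑ a ∈ s, m a b • x a := fun b =>
    bnd_eq_sum m x b s (fun a h => hxs a (fun h0 => h (by simp [h0])))
  refine pairing_adj_core m x y s t ?_ ?_ ?_ (fun b _ => hbd b)
  · exact pairing_eq_sum _ _ s (fun a h => hxs a (fun h0 => h (by simp [h0])))
  · refine pairing_eq_sum _ _ t (fun b h => ?_)
    by_contra hb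
    apply h
    have : bnd m x b = 0 := by
      rw [hbd b]
      refine Finset.sum_eq_zero fun a ha => ?_
      have : m a b = 0 := by
        by_contra hm; exact hb (hmem a ha b hm)
      simp [this]
    simp [this]
  · intro a ha
    exact cobnd_eq_sum m y a t (fun b h =>
      hmem a ha b (fun h0 => h (by simp [h0])))

/-- Adjointness when the cochain has finite support. -/
lemma pairing_adj_right {A B : Type*} (m : A → B → ℤ) (x : A → (G →+ QZ)) (y : B → G)
    (hy : {b | y b ≠ 0}.Finite) (hcol : ∀ b, {a | m a b ≠ 0}.Finite) :
    pairing x (cobnd m y) = pairing (bnd m x) y := by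
  classical
  set t : Finset B := hy.toFinset with ht
  set s : Finset A := t.biUnion (fun b => (hcol b).toFinset) with hs
  have hyt : ∀ b, y b ≠ 0 → b ∈ t := fun b hb => hy.mem_toFinset.2 hb
  have hmem : ∀ b ∈ t, ∀ a, m a b ≠ 0 → a ∈ s := fun b hb a hab =>
    Finset.mem_biUnion.2 ⟨b, hb, (hcol b).mem_toFinset.2 hab⟩
  have hco : ∀ a, cobnd m y a = ∑ b ∈ t, m a b • y b := fun a =>
    cobnd_eq_sum m y a t (fun b h => hyt b (fun h0 => h (by simp [h0])))
  refine pairing_adj_core m x y s t ?_ ?_ (fun a _ => hco a) ?_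
  · refine pairing_eq_sum _ _ s (fun a h => ?_)
    by_contra hns
    apply h
    have : cobnd m y a = 0 := by
      rw [hco a]
      refine Finset.sum_eq_zero fun b hb => ?_
      have : m a b = 0 := by
        by_contra hm; exact hns (hmem b hb a hm)
      simp [this]
    simp [this]
  · exact pairing_eq_sum _ _ t (fun b h => hyt b (fun h0 => h (by simp [h0])))
  · intro b hb
    exact bnd_eq_sum m x b s (fun a h =>
      hmem b hb a (fun h0 => h (by simp [h0])))

lemma bnd_support_finite {A B : Type*} (m : A → B → ℤ) (x : A → (G →+ QZ))
    (hx : {a | x a ≠ 0}.Finite) (hrow : ∀ a, {b | m a b ≠ 0}.Finite) :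
    {b | bnd m x b ≠ 0}.Finite := by
  refine (hx.biUnion (fun a _ => hrow a)).subset ?_
  intro b hb
  by_contra hnb
  apply hb
  have : ∀ a, m a b • x a = 0 := by
    intro a
    by_cases h0 : x a = 0
    · simp [h0]
    · have : m a b = 0 := by
        by_contra hm
        exact hnb (Set.mem_biUnion h0 hm)
      simp [this]
  simp only [bnd]
  exact finsum_eq_zero_of_forall_eq_zero this

lemma cobnd_support_finite {A B : Type*} (m : A → B → ℤ) (y : B → G)
    (hy : {b | y b ≠ 0}.Finite) (hcol : ∀ b, {a | m a b ≠ 0}.Finite) :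
    {a | cobnd m y a ≠ 0}.Finite := by
  refine (hy.biUnion (fun b _ => hcol b)).subset ?_
  intro a ha
  by_contra hna
  apply ha
  have : ∀ b, m a b • y b = 0 := by
    intro b
    by_cases h0 : y b = 0
    · simp [h0]
    · have : m a b = 0 := by
        by_contra hm
        exact hna (Set.mem_biUnion h0 hm)
      simp [this]
  simp only [cobnd]
  exact finsum_eq_zero_of_forall_eq_zero this

lemma bnd_bnd_eq_zero {A B C : Type*} (mA : A → B → ℤ) (mB : B → C → ℤ)
    (x : A → (G →+ QZ))
    (hcolA : ∀ b, {a | mA a b ≠ 0}.Finite) (hcolB : ∀ c, {b | mB b c ≠ 0}.Finite)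
    (hdd : ∀ a c, ∑ᶠ b, mA a b * mB b c = 0) (c : C) :
    bnd mB (bnd mA x) c = 0 := by
  classical
  set t : Finset B := (hcolB c).toFinset with htdef
  set s : Finset A := t.biUnion (fun b => (hcolA b).toFinset) with hsdef
  have ht : ∀ b, mB b c ≠ 0 → b ∈ t := fun b hb => (hcolB c).mem_toFinset.2 hb
  have hmem : ∀ b ∈ t, ∀ a, mA a b ≠ 0 → a ∈ s := fun b hb a hab =>
    Finset.mem_biUnion.2 ⟨b, hb, (hcolA b).mem_toFinset.2 hab⟩
  have h1 : bnd mB (bnd mA x) c = ∑ b ∈ t, mB b c • bnd mA x b :=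
    bnd_eq_sum mB _ c t (fun b h => ht b (fun h0 => h (by simp [h0])))
  rw [h1]
  have h2 : ∀ b ∈ t, mB b c • bnd mA x b = ∑ a ∈ s, (mA a b * mB b c) • x a := by
    intro b hb
    rw [bnd_eq_sum mA x b s (fun a h => hmem b hb a (fun h0 => h (by simp [h0]))),
      Finset.smul_sum]
    refine Finset.sum_congr rfl fun a _ => ?_
    rw [smul_smul, mul_comm]
  rw [Finset.sum_congr rfl h2, Finset.sum_comm]
  refine Finset.sum_eq_zero fun a _ => ?_
  rw [← Finset.sum_smul]
  have : ∑ b ∈ t, mA a b * mB b c = ∑ᶠ b, mA a b * mB b c :=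
    (finsum_eq_finset_sum_of_support_subset _ (by
      intro b hb
      simp only [Function.mem_support] at hb
      exact ht b (fun h0 => hb (by simp [h0])))).symm
  rw [this, hdd, zero_smul]

lemma cobnd_cobnd_eq_zero {A B C : Type*} (mA : A → B → ℤ) (mB : B → C → ℤ)
    (y : C → G)
    (hrowA : ∀ a, {b | mA a b ≠ 0}.Finite) (hrowB : ∀ b, {c | mB b c ≠ 0}.Finite)
    (hdd : ∀ a c, ∑ᶠ b, mA a b * mB b c = 0) (a : A) :
    cobnd mA (cobnd mB y) a = 0 := by
  classical
  set s : Finset B := (hrowA a).toFinset with hsdef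
  set t : Finset C := s.biUnion (fun b => (hrowB b).toFinset) with htdef
  have hs : ∀ b, mA a b ≠ 0 → b ∈ s := fun b hb => (hrowA a).mem_toFinset.2 hb
  have hmem : ∀ b ∈ s, ∀ c, mB b c ≠ 0 → c ∈ t := fun b hb c hbc =>
    Finset.mem_biUnion.2 ⟨b, hb, (hrowB b).mem_toFinset.2 hbc⟩
  have h1 : cobnd mA (cobnd mB y) a = ∑ b ∈ s, mA a b • cobnd mB y b :=
    cobnd_eq_sum mA _ a s (fun b h => hs b (fun h0 => h (by simp [h0])))
  rw [h1]
  have h2 : ∀ b ∈ s, mA a b • cobnd mB y b = ∑ c ∈ t, (mA a b * mB b c) • y c := by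
    intro b hb
    rw [cobnd_eq_sum mB y b t (fun c h => hmem b hb c (fun h0 => h (by simp [h0]))),
      Finset.smul_sum]
    refine Finset.sum_congr rfl fun c _ => ?_
    rw [smul_smul]
  rw [Finset.sum_congr rfl h2, Finset.sum_comm]
  refine Finset.sum_eq_zero fun c _ => ?_
  rw [← Finset.sum_smul]
  have : ∑ b ∈ s, mA a b * mB b c = ∑ᶠ b, mA a b * mB b c :=
    (finsum_eq_finset_sum_of_support_subset _ (by
      intro b hb
      simp only [Function.mem_support] at hb
      exact hs b (fun h0 => hb (by simp [h0])))).symm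
  rw [this, hdd, zero_smul]

end Helpers

/-- (Pairing between homology and cohomology at infinity.)
Model a cellular chain complex of `ℤ`-incidence numbers in degrees `n−1, n, n+1, n+2`:
cells are indexed by `Sm, S0, S1, S2` with incidence matrices `m0 : S0 → Sm → ℤ`,
`m1 : S1 → S0 → ℤ`, `m2 : S2 → S1 → ℤ`, all row- and column-finite and with `∂∂ = 0`.
Let `d` be a locally finite `(n+1)`-chain with finitely supported boundary and `a` an
`n`-cochain with finitely supported coboundary, and set
`Q(d, a) = ⟨d, ∂ᵀa⟩ − ⟨∂d, a⟩ ∈ ℚ/ℤ`.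
Then `Q(d, a)` is unchanged when `d` is replaced by `d + ∂f + d'` (`f` any locally
finite `(n+2)`-chain, `d'` finitely supported), unchanged when `a` is replaced by
`a + ∂ᵀe + a'` (`e` any `(n−1)`-cochain, `a'` finitely supported), and is additive in
each argument; hence it descends to a well-defined bilinear pairing
`H^∞_n(E; Ĝ) × H_∞^n(E; G) → ℚ/ℤ`. -/
theorem statement18 (G : Type*) [AddCommGroup G] [Finite G]
    (Sm S0 S1 S2 : Type*)
    (m0 : S0 → Sm → ℤ) (m1 : S1 → S0 → ℤ) (m2 : S2 → S1 → ℤ)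
    (hrow0 : ∀ x, {y | m0 x y ≠ 0}.Finite) (hcol0 : ∀ y, {x | m0 x y ≠ 0}.Finite)
    (hrow1 : ∀ x, {y | m1 x y ≠ 0}.Finite) (hcol1 : ∀ y, {x | m1 x y ≠ 0}.Finite)
    (hrow2 : ∀ x, {y | m2 x y ≠ 0}.Finite) (hcol2 : ∀ y, {x | m2 x y ≠ 0}.Finite)
    (hdd21 : ∀ (x : S2) (z : S0), ∑ᶠ y : S1, m2 x y * m1 y z = 0)
    (hdd10 : ∀ (x : S1) (z : Sm), ∑ᶠ y : S0, m1 x y * m0 y z = 0)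
    (d : S1 → (G →+ QZ)) (hd : {x | bnd m1 d x ≠ 0}.Finite)
    (a : S0 → G) (ha : {x | cobnd m1 a x ≠ 0}.Finite) :
    -- invariance under changing `d` by a locally finite boundary and a finite chain
    (∀ (f : S2 → (G →+ QZ)) (d' : S1 → (G →+ QZ)), {x | d' x ≠ 0}.Finite →
      pairing (fun x => d x + bnd m2 f x + d' x) (cobnd m1 a) -
          pairing (bnd m1 fun x => d x + bnd m2 f x + d' x) a =
        pairing d (cobnd m1 a) - pairing (bnd m1 d) a) ∧
    -- invariance under changing `a` by a coboundary and a finite cochain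
    (∀ (e : Sm → G) (a' : S0 → G), {y | a' y ≠ 0}.Finite →
      pairing d (cobnd m1 fun y => a y + cobnd m0 e y + a' y) -
          pairing (bnd m1 d) (fun y => a y + cobnd m0 e y + a' y) =
        pairing d (cobnd m1 a) - pairing (bnd m1 d) a) ∧
    -- additivity in the first argument
    (∀ d₂ : S1 → (G →+ QZ), {x | bnd m1 d₂ x ≠ 0}.Finite →
      pairing (fun x => d x + d₂ x) (cobnd m1 a) -
          pairing (bnd m1 fun x => d x + d₂ x) a =
        (pairing d (cobnd m1 a) - pairing (bnd m1 d) a) +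
          (pairing d₂ (cobnd m1 a) - pairing (bnd m1 d₂) a)) ∧
    -- additivity in the second argument
    (∀ a₂ : S0 → G, {x | cobnd m1 a₂ x ≠ 0}.Finite →
      pairing d (cobnd m1 fun y => a y + a₂ y) -
          pairing (bnd m1 d) (fun y => a y + a₂ y) =
        (pairing d (cobnd m1 a) - pairing (bnd m1 d) a) +
          (pairing d (cobnd m1 a₂) - pairing (bnd m1 d) a₂)) := by
  refine ⟨?_, ?_, ?_, ?_⟩
  · -- invariance in `d`
    intro f d' hd'
    have hzero1 : pairing (bnd m2 f) (cobnd m1 a) = 0 := by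
      rw [← pairing_adj_right m2 f (cobnd m1 a) ha hcol2]
      have h0 : cobnd m2 (cobnd m1 a) = fun _ => (0 : G) :=
        funext (cobnd_cobnd_eq_zero m2 m1 a hrow2 hrow1 hdd21)
      rw [h0, pairing_zero_right]
    have hsplit1 : pairing (fun x => d x + bnd m2 f x + d' x) (cobnd m1 a) =
        pairing d (cobnd m1 a) + pairing (bnd m1 d') a := by
      rw [pairing_add_left (fun x => d x + bnd m2 f x) d' (cobnd m1 a) ha,
        pairing_add_left d (bnd m2 f) (cobnd m1 a) ha, hzero1,
        pairing_adj_left m1 d' a hd' hrow1, add_zero]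
    have hbD : bnd m1 (fun x => d x + bnd m2 f x + d' x) =
        fun z => bnd m1 d z + bnd m1 d' z := by
      rw [bnd_add m1 (fun x => d x + bnd m2 f x) d' hcol1,
        bnd_add m1 d (bnd m2 f) hcol1]
      funext z
      beta_reduce
      rw [bnd_bnd_eq_zero m2 m1 f hcol2 hcol1 hdd21 z, add_zero]
    have hsplit2 : pairing (bnd m1 fun x => d x + bnd m2 f x + d' x) a =
        pairing (bnd m1 d) a + pairing (bnd m1 d') a := by
      rw [hbD]
      exact pairing_add_left' (bnd m1 d) (bnd m1 d') a hd
        (bnd_support_finite m1 d' hd' hrow1)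
    rw [hsplit1, hsplit2]
    abel
  · -- invariance in `a`
    intro e a' ha'
    have hA : cobnd m1 (fun y => a y + cobnd m0 e y + a' y) =
        fun z => cobnd m1 a z + cobnd m1 a' z := by
      rw [cobnd_add m1 (fun y => a y + cobnd m0 e y) a' hrow1,
        cobnd_add m1 a (cobnd m0 e) hrow1]
      funext z
      beta_reduce
      rw [cobnd_cobnd_eq_zero m1 m0 e hrow1 hrow0 hdd10 z, add_zero]
    have hsplit1 : pairing d (cobnd m1 fun y => a y + cobnd m0 e y + a' y) =
        pairing d (cobnd m1 a) + pairing (bnd m1 d) a' := by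
      rw [hA, pairing_add_right' d (cobnd m1 a) (cobnd m1 a') ha
          (cobnd_support_finite m1 a' ha' hcol1),
        pairing_adj_right m1 d a' ha' hcol1]
    have hzero2 : pairing (bnd m1 d) (cobnd m0 e) = 0 := by
      rw [pairing_adj_left m0 (bnd m1 d) e hd hrow0]
      have h0 : bnd m0 (bnd m1 d) = fun _ => (0 : G →+ QZ) :=
        funext (bnd_bnd_eq_zero m1 m0 d hcol1 hcol0 hdd10)
      rw [h0, pairing_zero_left]
    have hsplit2 : pairing (bnd m1 d) (fun y => a y + cobnd m0 e y + a' y) =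
        pairing (bnd m1 d) a + pairing (bnd m1 d) a' := by
      rw [pairing_add_right (bnd m1 d) (fun y => a y + cobnd m0 e y) a' hd,
        pairing_add_right (bnd m1 d) a (cobnd m0 e) hd, hzero2, add_zero]
    rw [hsplit1, hsplit2]
    abel
  · -- additivity in the first argument
    intro d₂ hd₂
    have hsplit1 : pairing (fun x => d x + d₂ x) (cobnd m1 a) =
        pairing d (cobnd m1 a) + pairing d₂ (cobnd m1 a) :=
      pairing_add_left d d₂ (cobnd m1 a) ha
    have hsplit2 : pairing (bnd m1 fun x => d x + d₂ x) a =
        pairing (bnd m1 d) a + pairing (bnd m1 d₂) a := by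
      rw [bnd_add m1 d d₂ hcol1]
      exact pairing_add_left' (bnd m1 d) (bnd m1 d₂) a hd hd₂
    rw [hsplit1, hsplit2]
    abel
  · -- additivity in the second argument
    intro a₂ ha₂
    have hsplit1 : pairing d (cobnd m1 fun y => a y + a₂ y) =
        pairing d (cobnd m1 a) + pairing d (cobnd m1 a₂) := by
      rw [cobnd_add m1 a a₂ hrow1]
      exact pairing_add_right' d (cobnd m1 a) (cobnd m1 a₂) ha ha₂
    have hsplit2 : pairing (bnd m1 d) (fun y => a y + a₂ y) =
        pairing (bnd m1 d) a + pairing (bnd m1 d) a₂ :=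
      pairing_add_right (bnd m1 d) a a₂ hd
    rw [hsplit1, hsplit2]
    abel
end
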